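/- arXiv:1806.10020 — 2 statements merged into one kernel-verified Lean document; each statement's English description precedes it below -/
import Mathlib

section
/- For the special case l = l' = 1 (the generalized difference operator B(r,s) with s ≠ 0), the spectrum of B(r,s) on c₀ is the closed disc {λ ∈ ℂ : |λ − r| ≤ |s|}, the point spectrum is empty, the residual spectrum is the open disc {λ : |λ − r| < |s|}, and the continuous spectrum is the circle {λ : |λ − r| = |s|}. -/
/-!
Since `B(r, s) - μ = B(r - μ, s)`, it suffices to understand injectivity and density of the range
of `B = B(r, s)` itself. It is injective because `B x = 0` forces `xₖ = 0` coordinate by coordinate.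
If `|r| < |s|`, the functional `y ↦ ∑ tᵏ yₖ` with `t = -r/s` is continuous on `c₀`, kills the range
and not `e₀`. If `|r| = |s|`, a functional `f` killing the range has `f eₖ₊₁ = t f eₖ` with
`|t| = 1`, while `(f eₖ)` is summable since the dual of `c₀` is `ℓ¹`; so `f = 0` and the range is
dense. If `|r| > |s|`, `‖B - r‖ ≤ |s|` keeps `0` out of the spectrum. Hence the spectrum is a
closed set between the open and the closed disc, and at the points of the circle the operator
has dense range without being invertible, so it is not bounded below.
-/

open Filter Topology Function ZeroAtInfty

namespace ContinuousLinearMap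

variable {𝕜 E F : Type*} [RCLike 𝕜] [NormedAddCommGroup E] [NormedSpace 𝕜 E]
  [NormedAddCommGroup F] [NormedSpace 𝕜 F]

theorem denseRange_of_forall_comp_eq_zero (T : E →L[𝕜] F)
    (h : ∀ f : StrongDual 𝕜 F, f.comp T = 0 → f = 0) : DenseRange T := by
  set K := (LinearMap.range (T : E →ₗ[𝕜] F)).topologicalClosure
  have : IsClosed (K : Set F) := Submodule.isClosed_topologicalClosure _
  rw [DenseRange, dense_iff_closure_eq, Set.eq_univ_iff_forall]
  intro y
  by_contra hy
  have hy' : K.mkQ y ≠ 0 := by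
    rw [Ne, Submodule.mkQ_apply, Submodule.Quotient.mk_eq_zero, ← SetLike.mem_coe,
      Submodule.topologicalClosure_coe]
    simpa [LinearMap.coe_range] using hy
  obtain ⟨g, hg⟩ := SeparatingDual.exists_ne_zero (R := 𝕜) hy'
  refine hg (congrArg (· y) (h (g.comp K.mkQL) ?_))
  ext x
  have hx : T x ∈ K := Submodule.le_topologicalClosure _ (LinearMap.mem_range_self _ x)
  rw [comp_apply, comp_apply, Submodule.mkQL_apply, Submodule.mkQ_apply,
    (Submodule.Quotient.mk_eq_zero K).2 hx, map_zero, zero_apply]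

theorem bijective_of_denseRange_of_le_norm [CompleteSpace E] [CompleteSpace F] {T : E →L[𝕜] F}
    (hT : DenseRange T) {c : ℝ} (hc : 0 < c) (h : ∀ x, c * ‖x‖ ≤ ‖T x‖) : Bijective T := by
  refine T.bijective_iff_dense_range_and_antilipschitz.2 ⟨?_, ⟨⟨c⁻¹, by positivity⟩, ?_⟩⟩
  · simpa [SetLike.ext'_iff, LinearMap.coe_range] using hT.closure_range
  · exact T.antilipschitz_of_bound fun x => (le_inv_mul_iff₀ hc).2 (h x)

theorem mem_spectrum_iff_not_bijective [CompleteSpace E] (T : E →L[𝕜] E) (μ : 𝕜) :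
    μ ∈ spectrum 𝕜 T ↔ ¬Bijective ⇑(T - μ • 1) := by
  rw [spectrum.mem_iff, ← neg_sub, IsUnit.neg_iff, Algebra.algebraMap_eq_smul_one,
    isUnit_iff_bijective]

theorem norm_sub_le_of_mem_spectrum [CompleteSpace E] [Nontrivial E] (T : E →L[𝕜] E) {μ : 𝕜}
    (hμ : μ ∈ spectrum 𝕜 T) (c : 𝕜) : ‖μ - c‖ ≤ ‖T - c • 1‖ := by
  refine spectrum.norm_le_norm_of_mem ?_
  rw [mem_spectrum_iff_not_bijective]
  convert (T.mem_spectrum_iff_not_bijective μ).1 hμ using 3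
  module

theorem closedBall_subset_spectrum [CompleteSpace E] (T : E →L[𝕜] E) {c : 𝕜} {ρ : ℝ}
    (hρ : ρ ≠ 0) (hball : Metric.ball c ρ ⊆ spectrum 𝕜 T) :
    Metric.closedBall c ρ ⊆ spectrum 𝕜 T := by
  rw [← closure_ball c hρ]
  exact (spectrum.isClosed T).closure_subset_iff.2 hball

end ContinuousLinearMap

namespace ZeroAtInftyContinuousMap

section Norm

variable {α E : Type*} [TopologicalSpace α] [NormedAddCommGroup E]

theorem norm_apply_le (f : C₀(α, E)) (x : α) : ‖f x‖ ≤ ‖f‖ := by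
  rw [← norm_toBCF_eq_norm]
  exact f.toBCF.norm_coe_le_norm x

theorem norm_le_iff {f : C₀(α, E)} {C : ℝ} (hC : 0 ≤ C) : ‖f‖ ≤ C ↔ ∀ x, ‖f x‖ ≤ C := by
  rw [← norm_toBCF_eq_norm]
  exact BoundedContinuousFunction.norm_le hC

theorem coe_sum {ι : Type*} (s : Finset ι) (f : ι → C₀(α, E)) :
    ⇑(∑ i ∈ s, f i) = ∑ i ∈ s, ⇑(f i) :=
  map_sum (⟨⟨DFunLike.coe, coe_zero⟩, coe_add⟩ : C₀(α, E) →+ (α → E)) f s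

end Norm

section Single

variable {α E : Type*} [TopologicalSpace α] [DiscreteTopology α] [DecidableEq α]
  [NormedAddCommGroup E]

def single (a : α) (x : E) : C₀(α, E) where
  toFun := Pi.single a x
  continuous_toFun := continuous_of_discreteTopology
  zero_at_infty' := by
    rw [cocompact_eq_cofinite]
    refine tendsto_const_nhds.congr' ?_
    filter_upwards [eventually_cofinite_ne a] with b hb
    simp [hb]

@[simp]
theorem coe_single (a : α) (x : E) : ⇑(single a x) = Pi.single a x := rfl

instance [Nonempty α] [Nontrivial E] : Nontrivial C₀(α, E) := by
  obtain ⟨a⟩ := ‹Nonempty α›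
  obtain ⟨x, hx⟩ := exists_ne (0 : E)
  exact nontrivial_of_ne (single a x) 0 fun h => hx (by simpa using congrArg (· a) h)

theorem single_smul {𝕜 : Type*} [NormedField 𝕜] [NormedSpace 𝕜 E] (a : α) (c : 𝕜) (x : E) :
    single a (c • x) = c • single a x := by
  ext b
  simp [Pi.single_smul']

theorem sum_single_apply (s : Finset α) (c : α → E) (b : α) :
    (∑ a ∈ s, single a (c a)) b = if b ∈ s then c b else 0 := by
  simp [coe_sum, Finset.sum_pi_single]

theorem norm_sum_single_le {s : Finset α} {c : α → E} {C : ℝ} (hC : 0 ≤ C)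
    (hc : ∀ a ∈ s, ‖c a‖ ≤ C) : ‖∑ a ∈ s, single a (c a)‖ ≤ C := by
  refine (norm_le_iff hC).2 fun b => ?_
  rw [sum_single_apply]
  split_ifs with hb
  exacts [hc b hb, by simpa using hC]

end Single

section Nat

variable {E : Type*} [NormedAddCommGroup E]

theorem tendsto_sum_range_single (f : C₀(ℕ, E)) :
    Tendsto (fun N => ∑ k ∈ Finset.range N, single k (f k)) atTop (𝓝 f) := by
  have hf : Tendsto f atTop (𝓝 0) := cocompact_eq_atTop (α := ℕ) ▸ f.zero_at_infty'
  refine Metric.tendsto_atTop.2 fun ε hε => ?_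
  obtain ⟨N, hN⟩ := Metric.tendsto_atTop.1 hf (ε / 2) (half_pos hε)
  refine ⟨N, fun n hn => ?_⟩
  rw [dist_eq_norm]
  refine lt_of_le_of_lt ((norm_le_iff (half_pos hε).le).2 fun j => ?_) (half_lt_self hε)
  rw [coe_sub, Pi.sub_apply, sum_single_apply]
  split_ifs with hj
  · simpa using (half_pos hε).le
  · simpa [dist_eq_norm] using (hN j (hn.trans (by simpa using hj))).le

theorem continuousLinearMap_ext_single {𝕜 F : Type*} [NormedField 𝕜] [NormedSpace 𝕜 E]
    [TopologicalSpace F] [AddCommMonoid F] [Module 𝕜 F] [T2Space F]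
    {f g : C₀(ℕ, E) →L[𝕜] F} (h : ∀ k x, f (single k x) = g (single k x)) : f = g := by
  ext y
  have hf := (f.continuous.tendsto y).comp (tendsto_sum_range_single y)
  have hg := (g.continuous.tendsto y).comp (tendsto_sum_range_single y)
  refine tendsto_nhds_unique hf (hg.congr fun N => ?_)
  simp [map_sum, h]

end Nat

section Dual

open ComplexConjugate

variable {𝕜 : Type*} [RCLike 𝕜]

theorem map_single_eq_smul {F : Type*} [AddCommMonoid F] [Module 𝕜 F] [TopologicalSpace F]
    (f : C₀(ℕ, 𝕜) →L[𝕜] F) (k : ℕ) (c : 𝕜) : f (single k c) = c • f (single k 1) := by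
  rw [← map_smul, ← single_smul, smul_eq_mul, mul_one]

theorem summable_norm_map_single_one (f : StrongDual 𝕜 C₀(ℕ, 𝕜)) :
    Summable fun k => ‖f (single k 1)‖ := by
  set α := fun k => f (single k 1)
  refine summable_of_sum_range_le (c := ‖f‖) (fun _ => norm_nonneg _) fun N => ?_
  -- `x / 0 = 0` makes the sign vector vanish where `α` does.
  set c : ℕ → 𝕜 := fun k => conj (α k) / ‖α k‖
  have hc (k : ℕ) : ‖c k‖ ≤ 1 := by
    simpa [c] using div_self_le_one ‖α k‖
  have hcα (k : ℕ) : c k * α k = ‖α k‖ := by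
    rw [div_mul_eq_mul_div, RCLike.conj_mul, sq, mul_self_div_self]
  have hf : f (∑ k ∈ Finset.range N, single k (c k)) =
      ((∑ k ∈ Finset.range N, ‖α k‖ : ℝ) : 𝕜) := by
    rw [map_sum, RCLike.ofReal_sum]
    refine Finset.sum_congr rfl fun k _ => ?_
    rw [← hcα, map_single_eq_smul, smul_eq_mul]
  calc ∑ k ∈ Finset.range N, ‖α k‖
      = ‖f (∑ k ∈ Finset.range N, single k (c k))‖ := by
        rw [hf, RCLike.norm_ofReal, abs_of_nonneg (Finset.sum_nonneg fun _ _ => norm_nonneg _)]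
    _ ≤ ‖f‖ * 1 := f.le_opNorm_of_le (norm_sum_single_le zero_le_one fun k _ => hc k)
    _ = ‖f‖ := mul_one _

variable {t : 𝕜}

theorem summable_pow_mul_apply (ht : ‖t‖ < 1) (y : C₀(ℕ, 𝕜)) :
    Summable fun k => t ^ k * y k := by
  refine .of_norm_bounded ((summable_geometric_of_lt_one (norm_nonneg t) ht).mul_left ‖y‖)
    fun k => ?_
  rw [norm_mul, norm_pow, mul_comm]
  exact mul_le_mul_of_nonneg_right (norm_apply_le y k) (by positivity)

noncomputable def geomFunctional (t : 𝕜) (ht : ‖t‖ < 1) : StrongDual 𝕜 C₀(ℕ, 𝕜) :=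
  LinearMap.mkContinuous
    { toFun := fun y => ∑' k, t ^ k * y k
      map_add' := fun x y => by
        simp only [coe_add, Pi.add_apply, mul_add]
        exact (summable_pow_mul_apply ht x).tsum_add (summable_pow_mul_apply ht y)
      map_smul' := fun c y => by
        simp only [coe_smul, Pi.smul_apply, smul_eq_mul, RingHom.id_apply, mul_left_comm _ c]
        exact tsum_mul_left }
    (1 - ‖t‖)⁻¹
    fun y => by
      refine (tsum_of_norm_bounded
        ((hasSum_geometric_of_lt_one (norm_nonneg t) ht).mul_left ‖y‖) fun k => ?_).trans_eq
        (mul_comm _ _)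
      rw [norm_mul, norm_pow, mul_comm]
      exact mul_le_mul_of_nonneg_right (norm_apply_le y k) (by positivity)

theorem geomFunctional_apply (ht : ‖t‖ < 1) (y : C₀(ℕ, 𝕜)) :
    geomFunctional t ht y = ∑' k, t ^ k * y k := rfl

theorem geomFunctional_single_zero (ht : ‖t‖ < 1) : geomFunctional t ht (single 0 1) = 1 := by
  rw [geomFunctional_apply, tsum_eq_single 0 fun k hk => by simp [hk]]
  simp

end Dual

end ZeroAtInftyContinuousMap

open ZeroAtInftyContinuousMap

/-- `B = B(r, s)`, i.e. `(B x)ₖ = s xₖ₋₁ + r xₖ` with `x₋₁ = 0`. -/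
structure IsDifferenceOperator {𝕜 : Type*} [RCLike 𝕜] (r s : 𝕜)
    (B : C₀(ℕ, 𝕜) →L[𝕜] C₀(ℕ, 𝕜)) : Prop where
  apply_zero : ∀ x, B x 0 = r * x 0
  apply_succ : ∀ x k, B x (k + 1) = s * x k + r * x (k + 1)

namespace IsDifferenceOperator

variable {𝕜 : Type*} [RCLike 𝕜] {r s : 𝕜} {B : C₀(ℕ, 𝕜) →L[𝕜] C₀(ℕ, 𝕜)}

theorem sub_smul_one (hB : IsDifferenceOperator r s B) (μ : 𝕜) :
    IsDifferenceOperator (r - μ) s (B - μ • 1) where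
  apply_zero x := by simp [hB.apply_zero, sub_mul]
  apply_succ x k := by
    simp only [_root_.sub_apply, _root_.smul_apply, one_apply_eq_self, coe_sub, coe_smul,
      Pi.sub_apply, hB.apply_succ, Pi.smul_apply, smul_eq_mul]
    ring

theorem apply_single (hB : IsDifferenceOperator r s B) (k : ℕ) (x : 𝕜) :
    B (single k x) = single (k + 1) (s * x) + single k (r * x) := by
  ext (_ | j)
  · simp [hB.apply_zero, Pi.single_apply]
  · simp [hB.apply_succ, Pi.single_apply]

theorem injective (hB : IsDifferenceOperator r s B) (hs : s ≠ 0) : Injective B := by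
  refine (injective_iff_map_eq_zero B).2 fun x hx => ?_
  have h0 : r * x 0 = 0 := by rw [← hB.apply_zero, hx, coe_zero, Pi.zero_apply]
  have hsucc (k : ℕ) : s * x k + r * x (k + 1) = 0 := by
    rw [← hB.apply_succ, hx, coe_zero, Pi.zero_apply]
  ext j
  by_cases hr : r = 0
  · simpa [hr, hs] using hsucc j
  · induction j with
    | zero => simpa [hr] using h0
    | succ k ih => simpa [ih, hr] using hsucc k

theorem norm_le (hB : IsDifferenceOperator 0 s B) : ‖B‖ ≤ ‖s‖ := by
  refine B.opNorm_le_bound (norm_nonneg s) fun x => (norm_le_iff (by positivity)).2 ?_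
  rintro (_ | k)
  · simp only [hB.apply_zero, zero_mul, norm_zero]
    positivity
  · rw [hB.apply_succ, zero_mul, add_zero, norm_mul]
    exact mul_le_mul_of_nonneg_left (norm_apply_le x k) (norm_nonneg s)

theorem norm_sub_le_of_mem_spectrum (hB : IsDifferenceOperator r s B) {μ : 𝕜}
    (hμ : μ ∈ spectrum 𝕜 B) : ‖μ - r‖ ≤ ‖s‖ := by
  have hBr := hB.sub_smul_one r
  rw [sub_self] at hBr
  exact (B.norm_sub_le_of_mem_spectrum hμ r).trans hBr.norm_le

theorem geomFunctional_apply_eq_zero (hB : IsDifferenceOperator r s B) {t : 𝕜} (ht : ‖t‖ < 1)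
    (hst : s * t + r = 0) (x : C₀(ℕ, 𝕜)) : geomFunctional t ht (B x) = 0 := by
  have hx := (summable_pow_mul_apply ht x).hasSum
  set S := ∑' k, t ^ k * x k
  have hx_succ : HasSum (fun k => t ^ (k + 1) * x (k + 1)) (S - x 0) :=
    (hasSum_nat_add_iff (f := fun k => t ^ k * x k) 1).2 (by simpa using hx)
  have hBx_succ : HasSum (fun k => t ^ (k + 1) * B x (k + 1)) (-(r * x 0)) := by
    have hterm (k : ℕ) :
        t ^ (k + 1) * B x (k + 1) = s * t * (t ^ k * x k) + r * (t ^ (k + 1) * x (k + 1)) := by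
      rw [hB.apply_succ]
      ring
    have h := (hx.mul_left (s * t)).add (hx_succ.mul_left r)
    rwa [show s * t * S + r * (S - x 0) = -(r * x 0) by linear_combination S * hst,
      ← funext hterm] at h
  rw [geomFunctional_apply,
    ((hasSum_nat_add_iff (f := fun k => t ^ k * B x k) 1).1 hBx_succ).tsum_eq]
  simp [hB.apply_zero]

theorem not_denseRange (hB : IsDifferenceOperator r s B) (hs : s ≠ 0) (hrs : ‖r‖ < ‖s‖) :
    ¬DenseRange B := by
  have ht : ‖-r / s‖ < 1 := by
    rwa [norm_div, norm_neg, div_lt_one (norm_pos_iff.2 hs)]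
  have hst : s * (-r / s) + r = 0 := by field_simp; ring
  intro hdense
  have hzero : ⇑(geomFunctional (-r / s) ht) = ⇑(0 : StrongDual 𝕜 C₀(ℕ, 𝕜)) :=
    hdense.equalizer (map_continuous _) (map_continuous _)
      (funext fun x => hB.geomFunctional_apply_eq_zero ht hst x)
  simpa [geomFunctional_single_zero] using congrFun hzero (single 0 1)

theorem denseRange_of_norm_eq (hB : IsDifferenceOperator r s B) (hs : s ≠ 0)
    (hrs : ‖r‖ = ‖s‖) : DenseRange B := by
  refine B.denseRange_of_forall_comp_eq_zero fun f hf => ?_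
  set t := -r / s
  have ht : ‖t‖ = 1 := by
    rw [norm_div, norm_neg, hrs, div_self (norm_ne_zero_iff.2 hs)]
  have hrec (k : ℕ) : f (single (k + 1) 1) = t * f (single k 1) := by
    have h := congrArg (· (single k 1)) hf
    simp only [ContinuousLinearMap.comp_apply, _root_.zero_apply, hB.apply_single, map_add,
      mul_one] at h
    rw [map_single_eq_smul f (k + 1) s, map_single_eq_smul f k r, smul_eq_mul, smul_eq_mul] at h
    rw [show t = -r / s from rfl, div_mul_eq_mul_div, eq_div_iff hs]
    linear_combination h
  have hconst (k : ℕ) : ‖f (single k 1)‖ = ‖f (single 0 1)‖ := by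
    induction k with
    | zero => rfl
    | succ k ih => rw [hrec, norm_mul, ht, one_mul, ih]
  have hzero : f (single 0 1) = 0 := by
    simpa only [hconst, summable_const_iff, norm_eq_zero] using summable_norm_map_single_one f
  refine continuousLinearMap_ext_single fun k x => ?_
  rw [map_single_eq_smul, norm_eq_zero.1 ((hconst k).trans (norm_eq_zero.2 hzero))]
  simp

theorem denseRange_iff (hB : IsDifferenceOperator r s B) (hs : s ≠ 0) :
    DenseRange B ↔ ‖s‖ ≤ ‖r‖ := by
  refine ⟨fun h => not_lt.1 fun hrs => hB.not_denseRange hs hrs h, fun h => ?_⟩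
  rcases h.eq_or_lt with hsr | hsr
  · exact hB.denseRange_of_norm_eq hs hsr.symm
  · have h0 : (0 : 𝕜) ∉ spectrum 𝕜 B := fun h0 =>
      hsr.not_ge (by simpa using hB.norm_sub_le_of_mem_spectrum h0)
    rw [B.mem_spectrum_iff_not_bijective, not_not] at h0
    simpa using h0.2.denseRange

theorem spectrum_eq (hB : IsDifferenceOperator r s B) (hs : s ≠ 0) :
    spectrum 𝕜 B = Metric.closedBall r ‖s‖ := by
  refine subset_antisymm
    (fun μ hμ => mem_closedBall_iff_norm.2 (hB.norm_sub_le_of_mem_spectrum hμ)) ?_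
  refine B.closedBall_subset_spectrum (norm_ne_zero_iff.2 hs) fun μ hμ => ?_
  rw [B.mem_spectrum_iff_not_bijective]
  exact fun hbij => (hB.sub_smul_one μ).not_denseRange hs
    (by rwa [norm_sub_rev, ← mem_ball_iff_norm]) hbij.2.denseRange

end IsDifferenceOperator

/-- For `B(r,s)` on `c₀` with `s ≠ 0`: the spectrum is the closed disc
`{λ : |λ-r| ≤ |s|}`, the point spectrum is empty, the residual spectrum is the open disc
`{λ : |λ-r| < |s|}`, and the continuous spectrum is the circle `{λ : |λ-r| = |s|}`. -/
theorem stmt_14 (r s : ℂ) (hs : s ≠ 0)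
    (B : ZeroAtInftyContinuousMap ℕ ℂ →L[ℂ] ZeroAtInftyContinuousMap ℕ ℂ)
    (hB0 : ∀ x : ZeroAtInftyContinuousMap ℕ ℂ, B x 0 = r * x 0)
    (hB : ∀ (x : ZeroAtInftyContinuousMap ℕ ℂ) (k : ℕ),
      B x (k + 1) = s * x k + r * x (k + 1)) :
    spectrum ℂ B = {lam : ℂ | ‖lam - r‖ ≤ ‖s‖} ∧
    (¬ ∃ (lam : ℂ) (x : ZeroAtInftyContinuousMap ℕ ℂ), x ≠ 0 ∧ B x = lam • x) ∧
    {lam : ℂ | Function.Injective ⇑(B - lam • 1) ∧ ¬ DenseRange ⇑(B - lam • 1)} =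
      {lam : ℂ | ‖lam - r‖ < ‖s‖} ∧
    {lam : ℂ | lam ∈ spectrum ℂ B ∧ Function.Injective ⇑(B - lam • 1) ∧
        DenseRange ⇑(B - lam • 1) ∧
        ¬ ∃ c > (0 : ℝ), ∀ x : ZeroAtInftyContinuousMap ℕ ℂ, c * ‖x‖ ≤ ‖(B - lam • 1) x‖} =
      {lam : ℂ | ‖lam - r‖ = ‖s‖} := by
  have hB' : IsDifferenceOperator r s B := ⟨hB0, hB⟩
  have hinj (μ : ℂ) : Injective ⇑(B - μ • 1) := (hB'.sub_smul_one μ).injective hs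
  have hdense (μ : ℂ) : DenseRange ⇑(B - μ • 1) ↔ ‖s‖ ≤ ‖μ - r‖ := by
    rw [(hB'.sub_smul_one μ).denseRange_iff hs, norm_sub_rev]
  have hspec : spectrum ℂ B = {μ | ‖μ - r‖ ≤ ‖s‖} := by
    ext μ
    rw [hB'.spectrum_eq hs, mem_closedBall_iff_norm, Set.mem_ofPred_eq]
  refine ⟨hspec, ?_, ?_, ?_⟩
  · rintro ⟨μ, x, hx, hBx⟩
    exact hx (hinj μ (by simp [hBx]))
  · ext μ
    simp only [Set.mem_ofPred_eq, hdense, not_le, hinj, true_and]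
  · ext μ
    simp only [hspec, Set.mem_ofPred_eq, hdense]
    refine ⟨fun h => le_antisymm h.1 h.2.2.1, fun h => ⟨h.le, hinj μ, h.ge, ?_⟩⟩
    rintro ⟨c, hc, hbound⟩
    have hμ : μ ∈ spectrum ℂ B := by rw [hspec]; exact h.le
    exact (B.mem_spectrum_iff_not_bijective μ).1 hμ
      (ContinuousLinearMap.bijective_of_denseRange_of_le_norm ((hdense μ).2 h.ge) hc hbound)
end

section
/- Let λ ∈ ℂ with (|λ-r₁|⋯|λ-r_l|)^{1/l} < (|s₁|⋯|s_{l'}|)^{1/l'} and λ ∉ {r₁,…,r_l}. Then the inverse matrix (B − λI)⁻¹ = (z_{nk}), which exists as a formal lower triangular inverse, satisfies sup_n Σ_k |z_{nk}| = ∞; in particular the inverse of B − λI is not a bounded operator. -/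
/-! The first column of the inverse satisfies `|z_{n+1,0}| = |s_n| / |r_{n+1} - λ| · |z_{n,0}|`.
Over the common period `l·l'` these factors multiply to
`ρ = (|s₁|⋯|s_{l'}|)^l / (|λ-r₁|⋯|λ-r_l|)^{l'}`, and the hypothesis on `λ` says exactly `ρ > 1`.
Hence `|z_{c·l·l',0}| = |z_{00}| ρ^c → ∞`, so even a single entry per row is unbounded. -/

open Finset Fin.NatCast

lemma Fin.prod_range_mul_natCast_add {M : Type*} [CommMonoid M] {n : ℕ} [NeZero n]
    (F : Fin n → M) (a c : ℕ) :
    ∏ m ∈ range (c * n), F ((a + m : ℕ) : Fin n) = (∏ j, F j) ^ c := by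
  induction c with
  | zero => simp
  | succ c ih =>
    have hblock : ∏ i ∈ range n, F ((a + (c * n + i) : ℕ) : Fin n) = ∏ j, F j := by
      have hcast : ∀ i : ℕ, ((a + (c * n + i) : ℕ) : Fin n) = (a : Fin n) + (i : Fin n) := by
        intro i; push_cast; simp
      simp_rw [hcast, ← Fin.prod_univ_eq_prod_range (fun i => F ((a : Fin n) + (i : Fin n))),
        Fin.cast_val_eq_self]
      exact Equiv.prod_comp (Equiv.addLeft (a : Fin n)) F
    rw [Nat.succ_mul, prod_range_add, ih, hblock, pow_succ]

lemma eq_mul_prod_range_of_succ {M : Type*} [CommMonoid M] {w q : ℕ → M}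
    (h : ∀ n, w (n + 1) = q n * w n) (n : ℕ) : w n = w 0 * ∏ m ∈ range n, q m := by
  induction n with
  | zero => simp
  | succ n ih => rw [h, ih, prod_range_succ]; ac_rfl

lemma pow_lt_pow_of_rpow_one_div_lt {a b : ℝ} (ha : 0 ≤ a) (hb : 0 ≤ b) {p q : ℕ}
    (hp : p ≠ 0) (hq : q ≠ 0) (h : a ^ ((1 : ℝ) / p) < b ^ ((1 : ℝ) / q)) : a ^ q < b ^ p := by
  have hpq : (0 : ℝ) < p * q := by positivity
  have := Real.rpow_lt_rpow (by positivity) h hpq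
  rwa [← Real.rpow_mul ha, ← Real.rpow_mul hb, one_div_mul_eq_div, one_div_mul_eq_div,
    mul_div_cancel_left₀ _ (by positivity), mul_div_cancel_right₀ _ (by positivity),
    Real.rpow_natCast, Real.rpow_natCast] at this

lemma norm_le_tsum_norm_of_eventually_zero {E : Type*} [SeminormedAddCommGroup E] {f : ℕ → E}
    {N : ℕ} (hf : ∀ k, N < k → f k = 0) (k : ℕ) : ‖f k‖ ≤ ∑' j, ‖f j‖ := by
  refine Summable.le_tsum ?_ k fun j _ => norm_nonneg _
  refine summable_of_ne_finset_zero (s := range (N + 1)) fun j hj => ?_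
  rw [hf j (by simpa using hj), norm_zero]

lemma prod_range_norm_div_norm_sub_common_period {l l' : ℕ} [NeZero l] [NeZero l'] (r : Fin l → ℂ)
    (s : Fin l' → ℂ) (lam : ℂ) (c : ℕ) :
    ∏ m ∈ range (c * (l * l')), ‖s m‖ / ‖r ↑(m + 1) - lam‖ =
      ((∏ j, ‖s j‖) ^ l / (∏ i, ‖lam - r i‖) ^ l') ^ c := by
  have hnum : ∏ m ∈ range (c * (l * l')), ‖s m‖ = (∏ j, ‖s j‖) ^ (c * l) := by
    simpa [← mul_assoc] using Fin.prod_range_mul_natCast_add (fun j => ‖s j‖) 0 (c * l)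
  have hden : ∏ m ∈ range (c * (l * l')), ‖r ↑(m + 1) - lam‖ =
      (∏ i, ‖lam - r i‖) ^ (c * l') := by
    rw [show c * (l * l') = c * l' * l by ring,
      ← Fin.prod_range_mul_natCast_add (fun i => ‖lam - r i‖) 1 (c * l')]
    exact prod_congr rfl fun m _ => by rw [norm_sub_rev, add_comm]
  rw [prod_div_distrib, hnum, hden, div_pow, pow_mul', pow_mul']

theorem stmt_15_general (l l' : ℕ) [NeZero l] [NeZero l'] (r : Fin l → ℂ) (s : Fin l' → ℂ)
    (lam : ℂ)
    (hlam : (∏ i, ‖lam - r i‖) ^ ((1 : ℝ) / l) <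
      (∏ j, ‖s j‖) ^ ((1 : ℝ) / l'))
    (hne : ∀ i, lam ≠ r i)
    (z : ℕ → ℕ → ℂ)
    (hdiag : ∀ k : ℕ, z k k = (r (↑k) - lam)⁻¹)
    (hzero : ∀ n k : ℕ, n < k → z n k = 0)
    (hrec : ∀ n k : ℕ, k ≤ n → z (n + 1) k = -(s (↑n)) * z n k / (r (↑(n + 1)) - lam)) :
    ¬ ∃ C : ℝ, ∀ n : ℕ, ∑' k, ‖z n k‖ ≤ C := by
  rintro ⟨C, hC⟩
  have hP : 0 < ∏ i, ‖lam - r i‖ :=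
    prod_pos fun i _ => norm_pos_iff.mpr (sub_ne_zero.mpr (hne i))
  have hρ : 1 < (∏ j, ‖s j‖) ^ l / (∏ i, ‖lam - r i‖) ^ l' :=
    (one_lt_div (pow_pos hP l')).mpr <| pow_lt_pow_of_rpow_one_div_lt hP.le (by positivity)
      (NeZero.ne l) (NeZero.ne l') hlam
  have hz₀ : 0 < ‖z 0 0‖ := by
    rw [hdiag 0]
    exact norm_pos_iff.mpr (inv_ne_zero (sub_ne_zero.mpr (hne _).symm))
  have hcol (n : ℕ) : z n 0 = z 0 0 * ∏ m ∈ range n, -s m / (r ↑(m + 1) - lam) :=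
    eq_mul_prod_range_of_succ (w := (z · 0)) (fun n => by rw [hrec n 0 n.zero_le]; ring) n
  obtain ⟨c, hc⟩ :=
    (((tendsto_pow_atTop_atTop_of_one_lt hρ).const_mul_atTop hz₀).eventually_gt_atTop C).exists
  have hgrowth := prod_range_norm_div_norm_sub_common_period r s lam c
  have hrow := norm_le_tsum_norm_of_eventually_zero (hzero (c * (l * l'))) 0
  rw [hcol] at hrow
  simp only [norm_mul, norm_prod, norm_div, norm_neg, hgrowth] at hrow
  linarith [hC (c * (l * l'))]

/-- If `(|λ-r₁|⋯|λ-r_l|)^{1/l} < (|s₁|⋯|s_{l'}|)^{1/l'}` and `λ ∉ {r₁,…,r_l}`,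
then the formal lower-triangular inverse `(z_{nk})` of `B - λI` (given by forward substitution)
has unbounded row `ℓ¹`-norms: `sup_n Σ_k |z_{nk}| = ∞`. -/
theorem stmt_15 (l l' : ℕ) [NeZero l] [NeZero l'] (r : Fin l → ℂ) (s : Fin l' → ℂ)
    (hs : ∀ j, s j ≠ 0) (lam : ℂ)
    (hlam : (∏ i, ‖lam - r i‖) ^ ((1 : ℝ) / l) <
      (∏ j, ‖s j‖) ^ ((1 : ℝ) / l'))
    (hne : ∀ i, lam ≠ r i)
    (z : ℕ → ℕ → ℂ)
    (hdiag : ∀ k : ℕ, z k k = (r (↑k) - lam)⁻¹)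
    (hzero : ∀ n k : ℕ, n < k → z n k = 0)
    (hrec : ∀ n k : ℕ, k ≤ n → z (n + 1) k = -(s (↑n)) * z n k / (r (↑(n + 1)) - lam)) :
    ¬ ∃ C : ℝ, ∀ n : ℕ, ∑' k, ‖z n k‖ ≤ C :=
  stmt_15_general l l' r s lam hlam hne z hdiag hzero hrec
end
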